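/- In ℝ², the function φ(x) = −2√(1−x²) on the segment 𝔻₁ = (−1,1) satisfies (1/2π) f.p.∫_{𝔻₁\(x−η,x+η)} φ(y)/|x−y|² dy → 1 (as η ↓ 0) for all x ∈ (−1,1), and ∫_{−1}^{1} φ(x) dx = −π. -/

import Mathlib

open MeasureTheory Set Real Filter Topology

noncomputable section

/-- The 2d equilibrium dipole distribution `φ(x) = -2√(1-x²)` on the segment `(-1,1)`. -/
def phiDip (x : ℝ) : ℝ := -2 * Real.sqrt (1 - x ^ 2)

/-!
For `x ∈ (-1,1)` the kernel `√(1-y²)/(x-y)²` has an explicit primitive `F_x` on either side of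
`x`, with `F_x(∓1) = ±π/2`, so the integral over `(-1,1) \ (x-η,x+η)` equals
`-2 (F_x(x-η) - F_x(x+η)) + 2π`. In this symmetric difference the logarithmic singularity
`log|x-y|` of `F_x` cancels, the continuous part of `F_x` contributes `o(1)`, and the pole
`√(1-y²)/(x-y)` contributes `(√(1-(x-η)²) + √(1-(x+η)²))/η = 2√(1-x²)/η + o(1)`, which is
exactly what the finite-part term `2φ(x)/η` removes.
-/

theorem HasDerivAt.tendsto_symmetric_difference_div {g : ℝ → ℝ} {g' x : ℝ}
    (hg : HasDerivAt g g' x) :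
    Tendsto (fun η => (g (x - η) + g (x + η) - 2 * g x) / η) (𝓝[>] 0) (𝓝 0) := by
  have hsum : HasDerivAt (fun t => g (x - t) + g (x + t)) 0 0 := by
    have hminus := HasDerivAt.comp_const_sub x 0 (by simpa using hg)
    have hplus := HasDerivAt.comp_const_add x 0 (by simpa using hg)
    simpa using hminus.fun_add hplus
  refine hsum.tendsto_slope_zero_right.congr fun η => ?_
  simp only [zero_add, sub_zero, add_zero, smul_eq_mul]
  ring

theorem setIntegral_Ioo_diff_Ioo {f : ℝ → ℝ} {a b c d : ℝ} (hac : a ≤ c) (hcd : c < d)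
    (hdb : d ≤ b) (hfac : IntegrableOn f (Icc a c)) (hfdb : IntegrableOn f (Icc d b)) :
    ∫ y in Ioo a b \ Ioo c d, f y = (∫ y in a..c, f y) + ∫ y in d..b, f y := by
  have hsplit : Ioo a b \ Ioo c d = Ioc a c ∪ Ico d b := by
    ext y
    simp only [Set.mem_sdiff, mem_Ioo, mem_union, mem_Ioc, mem_Ico, not_and, not_lt]
    constructor
    · rintro ⟨⟨hay, hyb⟩, hy⟩
      rcases le_or_gt y c with hyc | hcy
      · exact Or.inl ⟨hay, hyc⟩
      · exact Or.inr ⟨hy hcy, hyb⟩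
    · rintro (⟨hay, hyc⟩ | ⟨hdy, hyb⟩)
      · exact ⟨⟨hay, by linarith⟩, fun h => by linarith⟩
      · exact ⟨⟨by linarith, hyb⟩, fun h => by linarith⟩
  have hdisj : Disjoint (Ioc a c) (Ico d b) :=
    Set.disjoint_left.mpr fun y hy hy' => by linarith [hy.2, hy'.1]
  rw [hsplit, setIntegral_union hdisj measurableSet_Ico (hfac.mono_set Ioc_subset_Icc_self)
    (hfdb.mono_set Ico_subset_Icc_self), intervalIntegral.integral_of_le hac,
    intervalIntegral.integral_of_le hdb, integral_Ico_eq_integral_Ioo,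
    integral_Ioc_eq_integral_Ioo (x := d)]

theorem hasDerivAt_sqrt_one_sub_sq {y : ℝ} (hy : y ∈ Ioo (-1 : ℝ) 1) :
    HasDerivAt (fun t : ℝ => √(1 - t ^ 2)) (-y / √(1 - y ^ 2)) y := by
  have hpos : (0 : ℝ) < 1 - y ^ 2 := by nlinarith [hy.1, hy.2]
  have hinner : HasDerivAt (fun t : ℝ => 1 - t ^ 2) (-(2 * y)) y := by
    simpa using (hasDerivAt_pow 2 y).const_sub 1
  refine (hinner.sqrt hpos.ne').congr_deriv ?_
  field_simp

def dipoleRegularPart (x y : ℝ) : ℝ :=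
  -arcsin y + x / √(1 - x ^ 2) * log (1 - x * y + √(1 - x ^ 2) * √(1 - y ^ 2))

/-- A primitive of `y ↦ √(1-y²)/(x-y)²` on `[-1,1] \ {x}`; here `log (x - y)` is `log |x - y|`. -/
def dipolePrimitive (x y : ℝ) : ℝ :=
  √(1 - y ^ 2) / (x - y) + dipoleRegularPart x y - x / √(1 - x ^ 2) * log (x - y)

section Primitive

variable {x : ℝ}

theorem one_sub_mul_add_sqrt_mul_sqrt_pos (hx : x ∈ Ioo (-1 : ℝ) 1) {y : ℝ}
    (hy : y ∈ Icc (-1 : ℝ) 1) : 0 < 1 - x * y + √(1 - x ^ 2) * √(1 - y ^ 2) := by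
  have hxy : x * y < 1 := by
    nlinarith [sq_nonneg (x - y), sq_nonneg (x + y), hx.1, hx.2, hy.1, hy.2]
  have := mul_nonneg (sqrt_nonneg (1 - x ^ 2)) (sqrt_nonneg (1 - y ^ 2))
  linarith

theorem continuousAt_dipoleRegularPart (hx : x ∈ Ioo (-1 : ℝ) 1) :
    ContinuousAt (dipoleRegularPart x) x := by
  have hpos := one_sub_mul_add_sqrt_mul_sqrt_pos hx (Ioo_subset_Icc_self hx)
  unfold dipoleRegularPart
  fun_prop (disch := exact hpos.ne')

theorem continuousOn_dipolePrimitive (hx : x ∈ Ioo (-1 : ℝ) 1) :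
    ContinuousOn (dipolePrimitive x) (Icc (-1 : ℝ) 1 \ {x}) := by
  have hxy : ∀ y ∈ Icc (-1 : ℝ) 1 \ {x}, x - y ≠ 0 := fun y hy => sub_ne_zero.mpr (Ne.symm hy.2)
  have hpos : ∀ y ∈ Icc (-1 : ℝ) 1 \ {x}, 1 - x * y + √(1 - x ^ 2) * √(1 - y ^ 2) ≠ 0 :=
    fun y hy => (one_sub_mul_add_sqrt_mul_sqrt_pos hx hy.1).ne'
  unfold dipolePrimitive dipoleRegularPart
  fun_prop (disch := assumption)

theorem hasDerivAt_dipolePrimitive (hx : x ∈ Ioo (-1 : ℝ) 1) {y : ℝ} (hy : y ∈ Ioo (-1 : ℝ) 1)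
    (hyx : y ≠ x) : HasDerivAt (dipolePrimitive x) (√(1 - y ^ 2) / (x - y) ^ 2) y := by
  have hs2 : (0 : ℝ) < 1 - x ^ 2 := by nlinarith [hx.1, hx.2]
  have hu2 : (0 : ℝ) < 1 - y ^ 2 := by nlinarith [hy.1, hy.2]
  have hA := one_sub_mul_add_sqrt_mul_sqrt_pos hx (Ioo_subset_Icc_self hy)
  have hU := hasDerivAt_sqrt_one_sub_sq hy
  set s := √(1 - x ^ 2)
  set u := √(1 - y ^ 2)
  have hs : 0 < s := sqrt_pos.mpr hs2
  have hu : 0 < u := sqrt_pos.mpr hu2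
  have hssq : s ^ 2 = 1 - x ^ 2 := sq_sqrt hs2.le
  have husq : u ^ 2 = 1 - y ^ 2 := sq_sqrt hu2.le
  have hxy : x - y ≠ 0 := sub_ne_zero.mpr (Ne.symm hyx)
  have hV : HasDerivAt (fun t : ℝ => x - t) (-1) y := by
    simpa using (hasDerivAt_id y).const_sub x
  have hArg : HasDerivAt (fun t : ℝ => 1 - x * t + s * √(1 - t ^ 2)) (-x + s * (-y / u)) y := by
    simpa using (((hasDerivAt_id y).const_mul x).const_sub 1).fun_add (hU.const_mul s)
  have harcsin : HasDerivAt arcsin (1 / u) y := hasDerivAt_arcsin hy.1.ne' hy.2.ne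
  have hD := ((hU.fun_div hV hxy).fun_add
    ((harcsin.fun_neg).fun_add ((hArg.log hA.ne').const_mul (x / s)))).fun_sub
    ((hV.log hxy).const_mul (x / s))
  have hF : dipolePrimitive x = fun t => √(1 - t ^ 2) / (x - t) +
      (-arcsin t + x / s * log (1 - x * t + s * √(1 - t ^ 2))) - x / s * log (x - t) := rfl
  rw [hF]
  refine hD.congr_deriv ?_
  have hlogs : (-x + s * (-y / u)) / (1 - x * y + s * u) - -1 / (x - y) = s / (u * (x - y)) := by
    rw [div_sub_div _ _ hA.ne' hxy, div_eq_div_iff (mul_ne_zero hA.ne' hxy)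
      (mul_ne_zero hu.ne' hxy)]
    field_simp
    linear_combination s * husq - u * hssq
  rw [show √(1 - y ^ 2) = u from rfl]
  calc _ = (u - y / u * (x - y)) / (x - y) ^ 2 - 1 / u + x / s *
        ((-x + s * (-y / u)) / (1 - x * y + s * u) - -1 / (x - y)) := by ring
    _ = u / (x - y) ^ 2 := by
      rw [hlogs]
      field_simp
      ring

theorem continuousOn_sqrt_one_sub_sq_div_sq {s : Set ℝ} (hxs : x ∉ s) :
    ContinuousOn (fun y => √(1 - y ^ 2) / (x - y) ^ 2) s := by
  have hne : ∀ y ∈ s, (x - y) ^ 2 ≠ 0 := fun y hy =>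
    pow_ne_zero _ (sub_ne_zero.mpr fun h => hxs (h ▸ hy))
  fun_prop (disch := assumption)

theorem integral_sqrt_one_sub_sq_div_sq (hx : x ∈ Ioo (-1 : ℝ) 1) {a b : ℝ} (ha : -1 ≤ a)
    (hab : a ≤ b) (hb : b ≤ 1) (hxab : x ∉ Icc a b) :
    ∫ y in a..b, √(1 - y ^ 2) / (x - y) ^ 2 = dipolePrimitive x b - dipolePrimitive x a := by
  have hsub : Icc a b ⊆ Icc (-1 : ℝ) 1 \ {x} := fun y hy =>
    ⟨⟨ha.trans hy.1, hy.2.trans hb⟩, fun h => hxab (h ▸ hy)⟩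
  refine intervalIntegral.integral_eq_sub_of_hasDerivAt_of_le hab
    ((continuousOn_dipolePrimitive hx).mono hsub) (fun y hy => ?_) ?_
  · exact hasDerivAt_dipolePrimitive hx ⟨ha.trans_lt hy.1, hy.2.trans_le hb⟩
      fun h => hxab (h ▸ Ioo_subset_Icc_self hy)
  · exact (continuousOn_sqrt_one_sub_sq_div_sq hxab).intervalIntegrable_of_Icc hab

theorem dipolePrimitive_one : dipolePrimitive x 1 = -(π / 2) := by
  have hlog : log (x - 1) = log (1 - x) := by rw [← log_neg_eq_log, neg_sub]
  simp [dipolePrimitive, dipoleRegularPart, hlog]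

theorem dipolePrimitive_neg_one : dipolePrimitive x (-1) = π / 2 := by
  simp [dipolePrimitive, dipoleRegularPart, add_comm]

theorem setIntegral_phiDip_div_sq (hx : x ∈ Ioo (-1 : ℝ) 1) {η : ℝ} (hη : 0 < η)
    (hleft : -1 ≤ x - η) (hright : x + η ≤ 1) :
    ∫ y in Ioo (-1 : ℝ) 1 \ Ioo (x - η) (x + η), phiDip y / |x - y| ^ 2 =
      -2 * (dipolePrimitive x (x - η) - dipolePrimitive x (x + η)) + 2 * π := by
  have hkernel : (fun y => phiDip y / |x - y| ^ 2) = fun y => -2 * (√(1 - y ^ 2) / (x - y) ^ 2) :=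
    funext fun y => by rw [phiDip, sq_abs, mul_div_assoc]
  have hxl : x ∉ Icc (-1) (x - η) := fun h => by linarith [h.2]
  have hxr : x ∉ Icc (x + η) 1 := fun h => by linarith [h.1]
  have hint {a b : ℝ} (hxab : x ∉ Icc a b) :
      IntegrableOn (fun y => -2 * (√(1 - y ^ 2) / (x - y) ^ 2)) (Icc a b) :=
    ((continuousOn_sqrt_one_sub_sq_div_sq hxab).const_smul (-2 : ℝ)).integrableOn_Icc
  rw [hkernel, setIntegral_Ioo_diff_Ioo hleft (by linarith) hright (hint hxl) (hint hxr),
    intervalIntegral.integral_const_mul, intervalIntegral.integral_const_mul,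
    integral_sqrt_one_sub_sq_div_sq hx le_rfl hleft (by linarith) hxl,
    integral_sqrt_one_sub_sq_div_sq hx (by linarith) hright le_rfl hxr,
    dipolePrimitive_neg_one, dipolePrimitive_one]
  ring

theorem dipolePrimitive_sub_sub {η : ℝ} (hη : η ≠ 0) :
    dipolePrimitive x (x - η) - dipolePrimitive x (x + η) - 2 * √(1 - x ^ 2) / η =
      (√(1 - (x - η) ^ 2) + √(1 - (x + η) ^ 2) - 2 * √(1 - x ^ 2)) / η +
        (dipoleRegularPart x (x - η) - dipoleRegularPart x (x + η)) := by
  have hl : x - (x - η) = η := by ring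
  have hr : x - (x + η) = -η := by ring
  simp only [dipolePrimitive, hl, hr, log_neg_eq_log, div_neg]
  field_simp
  ring

theorem tendsto_dipolePrimitive_sub_sub (hx : x ∈ Ioo (-1 : ℝ) 1) :
    Tendsto (fun η => dipolePrimitive x (x - η) - dipolePrimitive x (x + η) - 2 * √(1 - x ^ 2) / η)
      (𝓝[>] 0) (𝓝 0) := by
  have hsym := (hasDerivAt_sqrt_one_sub_sq hx).tendsto_symmetric_difference_div
  have hreg : Tendsto (fun η => dipoleRegularPart x (x - η) - dipoleRegularPart x (x + η))
      (𝓝[>] 0) (𝓝 0) := by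
    have hc := (continuousAt_dipoleRegularPart hx).tendsto
    have hl : Tendsto (fun η : ℝ => x - η) (𝓝 0) (𝓝 x) := by
      simpa using (continuous_sub_left x).tendsto 0
    have hr : Tendsto (fun η : ℝ => x + η) (𝓝 0) (𝓝 x) := by
      simpa using (continuous_const_add x).tendsto 0
    simpa using ((hc.comp hl).sub (hc.comp hr)).mono_left nhdsWithin_le_nhds
  refine (zero_add (0 : ℝ) ▸ hsym.add hreg).congr' ?_
  filter_upwards [self_mem_nhdsWithin] with η hη
  exact (dipolePrimitive_sub_sub (ne_of_gt hη)).symm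

end Primitive

theorem integral_phiDip : ∫ x in Ioo (-1 : ℝ) 1, phiDip x = -π := by
  rw [← integral_Ioc_eq_integral_Ioo, ← intervalIntegral.integral_of_le (by norm_num)]
  simp only [phiDip]
  rw [intervalIntegral.integral_const_mul, integral_sqrt_one_sub_sq]
  ring

/-- The function `φ(x) = -2√(1-x²)` on `𝔻₁ = (-1,1)` satisfies
`(1/2π) f.p.∫_{𝔻₁\(x-η,x+η)} φ(y)/|x-y|² dy → 1` as `η ↓ 0` (Hadamard finite part)
for all `x ∈ (-1,1)`, and `∫_{-1}^1 φ = -π`. -/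
theorem stmt_16 :
    (∀ x ∈ Ioo (-1 : ℝ) 1,
      Tendsto (fun η : ℝ =>
          (1 / (2 * π)) *
            ((∫ y in Ioo (-1 : ℝ) 1 \ Ioo (x - η) (x + η), phiDip y / |x - y| ^ 2)
              - 2 * phiDip x / η))
        (𝓝[>] 0) (𝓝 1)) ∧
    ∫ x in Ioo (-1 : ℝ) 1, phiDip x = -π := by
  refine ⟨fun x hx => ?_, integral_phiDip⟩
  have hlim : Tendsto (fun η => 1 - (dipolePrimitive x (x - η) - dipolePrimitive x (x + η) -
      2 * √(1 - x ^ 2) / η) / π) (𝓝[>] 0) (𝓝 1) := by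
    simpa using tendsto_const_nhds.sub ((tendsto_dipolePrimitive_sub_sub hx).div_const π)
  have hgap : 0 < 1 - |x| := sub_pos.mpr (abs_lt.mpr hx)
  refine hlim.congr' ?_
  filter_upwards [Ioo_mem_nhdsGT hgap] with η ⟨hη, hηx⟩
  rw [setIntegral_phiDip_div_sq hx hη (by linarith [neg_abs_le x]) (by linarith [le_abs_self x]),
    phiDip]
  field_simp
  ring
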